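/- arXiv:1601.05793 — 6 statements merged into one kernel-verified Lean document; each statement's English description precedes it below -/
import Mathlib

section
/- SAFT inversion formula: if f ∈ L¹(ℝ) is continuous and its SAFT F_A belongs to L¹(ℝ), then for every t ∈ ℝ, f(t) = (2πb)^(−1/2) · ∫_ℝ F_A(ω) · exp(−(Complex.I/(2b)) · (d·ω² + a·t² − 2·t·ω + Ω·ω + 2·p·t)) dω. -/
/-!
Multiplying out the exponent, the SAFT kernel factors as a chirp in `t`, a chirp in `ω` and the
Fourier kernel at frequency `ω / (2πb)`. Hence `SAFT f` is, up to a unimodular factor in `ω` and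
the normalisation `(2πb)^(-1/2)`, the rescaled Fourier transform of
`g t = f t · exp (i (a t² + 2 p t) / (2b))`.
Fourier inversion for `g`, followed by the substitution `ω = 2πb ξ`, recovers `g`, and hence `f`.
-/

open MeasureTheory Real

/-- The Special Affine Fourier Transform (SAFT) with parameters `a, b, c, d, p, q`,
where `Ω = 2*(b*q - d*p)`. -/
noncomputable def SAFT (a b d p q : ℝ) (f : ℝ → ℂ) (ω : ℝ) : ℂ :=
  (Real.sqrt (2 * π * b) : ℂ)⁻¹ *
    ∫ t : ℝ, f t * Complex.exp (Complex.I / (2 * b) *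
      ((a * t ^ 2 + d * ω ^ 2 - 2 * t * ω + 2 * p * t + 2 * (b * q - d * p) * ω : ℝ) : ℂ))

open FourierTransform

noncomputable def saftPhase (b x : ℝ) : ℂ :=
  Complex.exp (Complex.I / (2 * b) * x)

section saftPhase

variable {b : ℝ}

lemma saftPhase_add (x y : ℝ) : saftPhase b (x + y) = saftPhase b x * saftPhase b y := by
  simp only [saftPhase, ← Complex.exp_add, Complex.ofReal_add, mul_add]

lemma saftPhase_neg_mul_self (x : ℝ) : saftPhase b (-x) * saftPhase b x = 1 := by
  rw [← saftPhase_add, neg_add_cancel, saftPhase, Complex.ofReal_zero, mul_zero, Complex.exp_zero]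

lemma exp_neg_I_div_mul_eq_saftPhase (x : ℝ) :
    Complex.exp (-(Complex.I / (2 * b)) * x) = saftPhase b (-x) := by
  rw [saftPhase, Complex.ofReal_neg, neg_mul, mul_neg]

lemma saftPhase_eq_exp_ofReal_mul_I (x : ℝ) :
    saftPhase b x = Complex.exp (↑(x / (2 * b)) * Complex.I) := by
  rw [saftPhase]
  push_cast
  ring_nf

lemma norm_saftPhase (x : ℝ) : ‖saftPhase b x‖ = 1 := by
  rw [saftPhase_eq_exp_ofReal_mul_I, Complex.norm_exp_ofReal_mul_I]

lemma continuous_saftPhase : Continuous (saftPhase b) := by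
  unfold saftPhase
  fun_prop

lemma MeasureTheory.Integrable.mul_saftPhase_comp {α : Type*} [MeasurableSpace α]
    {μ : Measure α} {f : α → ℂ} (hf : Integrable f μ) {φ : α → ℝ} (hφ : Measurable φ) :
    Integrable (fun x => f x * saftPhase b (φ x)) μ := by
  simp_rw [mul_comm (f _)]
  exact hf.bdd_mul (continuous_saftPhase.measurable.comp hφ).aestronglyMeasurable
    (.of_forall fun x => (norm_saftPhase (φ x)).le)

lemma saftPhase_two_mul_mul (hb : b ≠ 0) (t ω : ℝ) :
    saftPhase b (2 * t * ω) =
      Complex.exp (↑(2 * π * (t * (ω / (2 * π * b)))) * Complex.I) := by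
  rw [saftPhase_eq_exp_ofReal_mul_I]
  congr 3
  field_simp

end saftPhase

noncomputable def saftModulate (a b p : ℝ) (f : ℝ → ℂ) (t : ℝ) : ℂ :=
  f t * saftPhase b (a * t ^ 2 + 2 * p * t)

lemma SAFT_eq_fourier {a b p : ℝ} (d q : ℝ) (hb : b ≠ 0) (f : ℝ → ℂ) (ω : ℝ) :
    SAFT a b d p q f ω = (Real.sqrt (2 * π * b) : ℂ)⁻¹ *
      (saftPhase b (d * ω ^ 2 + 2 * (b * q - d * p) * ω) *
        𝓕 (saftModulate a b p f) (ω / (2 * π * b))) := by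
  rw [SAFT, Real.fourier_real_eq_integral_exp_smul]
  congr 1
  rw [← integral_const_mul]
  congr 1 with t
  have hkernel : saftPhase b (-2 * t * ω) =
      Complex.exp (↑(-2 * π * t * (ω / (2 * π * b))) * Complex.I) := by
    rw [saftPhase_eq_exp_ofReal_mul_I]
    congr 3
    field_simp
  have hsplit : a * t ^ 2 + d * ω ^ 2 - 2 * t * ω + 2 * p * t + 2 * (b * q - d * p) * ω =
      d * ω ^ 2 + 2 * (b * q - d * p) * ω + (-2 * t * ω + (a * t ^ 2 + 2 * p * t)) := by ring
  change f t * saftPhase b _ = _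
  rw [hsplit, saftPhase_add _ (-2 * t * ω + _), saftPhase_add (-2 * t * ω), hkernel, saftModulate,
    smul_eq_mul]
  ring

lemma integrable_saftModulate {a b p : ℝ} {f : ℝ → ℂ} (hf : Integrable f) :
    Integrable (saftModulate a b p f) :=
  hf.mul_saftPhase_comp (by fun_prop)

lemma continuous_saftModulate {a b p : ℝ} {f : ℝ → ℂ} (hf : Continuous f) :
    Continuous (saftModulate a b p f) :=
  hf.mul (continuous_saftPhase.comp (by fun_prop))

lemma ofReal_sqrt_two_pi_mul_ne_zero {b : ℝ} (hb : 0 < b) :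
    (Real.sqrt (2 * π * b) : ℂ) ≠ 0 :=
  Complex.ofReal_ne_zero.2 (Real.sqrt_pos.2 (by positivity)).ne'

lemma integrable_fourier_saftModulate {a b d p q : ℝ} (hb : 0 < b) {f : ℝ → ℂ}
    (hF : Integrable (SAFT a b d p q f)) : Integrable (𝓕 (saftModulate a b p f)) := by
  have hR : 2 * π * b ≠ 0 := by positivity
  rw [← integrable_comp_div_iff _ hR]
  have hprod := (hF.const_mul (Real.sqrt (2 * π * b) : ℂ)).mul_saftPhase_comp
    (b := b) (φ := fun ω => -(d * ω ^ 2 + 2 * (b * q - d * p) * ω)) (by fun_prop)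
  refine hprod.congr (.of_forall fun ω => ?_)
  dsimp only
  rw [SAFT_eq_fourier d q hb.ne', mul_inv_cancel_left₀ (ofReal_sqrt_two_pi_mul_ne_zero hb),
    mul_comm, ← mul_assoc,     saftPhase_neg_mul_self, one_mul]

lemma integral_exp_smul_fourier_comp_div {g : ℝ → ℂ} (hg : Integrable g)
    (hFg : Integrable (𝓕 g)) {t : ℝ} (ht : ContinuousAt g t) (R : ℝ) :
    ∫ ω, Complex.exp (↑(2 * π * (t * (ω / R))) * Complex.I) • 𝓕 g (ω / R) = |R| • g t := by
  rw [Measure.integral_comp_div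
      (fun ξ => Complex.exp (↑(2 * π * (t * ξ)) * Complex.I) • 𝓕 g ξ),
    ← hg.fourierInv_fourier_eq hFg ht, Real.fourierInv_eq']
  simp only [RCLike.inner_apply, conj_trivial]

lemma SAFT_mul_exp_neg_eq {a b d p q : ℝ} (hb : b ≠ 0) (f : ℝ → ℂ) (t ω : ℝ) :
    SAFT a b d p q f ω * Complex.exp (-(Complex.I / (2 * b)) *
      ((d * ω ^ 2 + a * t ^ 2 - 2 * t * ω + 2 * (b * q - d * p) * ω + 2 * p * t : ℝ) : ℂ)) =
    (Real.sqrt (2 * π * b) : ℂ)⁻¹ * saftPhase b (-(a * t ^ 2 + 2 * p * t)) *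
      (Complex.exp (↑(2 * π * (t * (ω / (2 * π * b)))) * Complex.I) •
        𝓕 (saftModulate a b p f) (ω / (2 * π * b))) := by
  have hsplit : -(d * ω ^ 2 + a * t ^ 2 - 2 * t * ω + 2 * (b * q - d * p) * ω + 2 * p * t) =
      -(d * ω ^ 2 + 2 * (b * q - d * p) * ω) + (-(a * t ^ 2 + 2 * p * t) + 2 * t * ω) := by ring
  rw [SAFT_eq_fourier d q hb, exp_neg_I_div_mul_eq_saftPhase, hsplit, saftPhase_add (-_),
    saftPhase_add (-_) (2 * t * ω), ← saftPhase_two_mul_mul hb, smul_eq_mul]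
  linear_combination (Real.sqrt (2 * π * b) : ℂ)⁻¹ *
    𝓕 (saftModulate a b p f) (ω / (2 * π * b)) * saftPhase b (-(a * t ^ 2 + 2 * p * t)) *
    saftPhase b (2 * t * ω) *
    saftPhase_neg_mul_self (d * ω ^ 2 + 2 * (b * q - d * p) * ω)

theorem saft_inversion_general (a b d p q : ℝ) (hb : 0 < b)
    (f : ℝ → ℂ) (hf1 : Integrable f) (hfc : Continuous f)
    (hF1 : Integrable (SAFT a b d p q f)) :
    ∀ t : ℝ, f t =
      (Real.sqrt (2 * π * b) : ℂ)⁻¹ *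
        ∫ ω : ℝ, SAFT a b d p q f ω * Complex.exp (-(Complex.I / (2 * b)) *
          ((d * ω ^ 2 + a * t ^ 2 - 2 * t * ω + 2 * (b * q - d * p) * ω + 2 * p * t : ℝ) : ℂ)) := by
  intro t
  have hinv := integral_exp_smul_fourier_comp_div (integrable_saftModulate hf1)
    (integrable_fourier_saftModulate hb hF1) ((continuous_saftModulate hfc).continuousAt (x := t))
    (2 * π * b)
  have hnormalise : (Real.sqrt (2 * π * b) : ℂ)⁻¹ * (Real.sqrt (2 * π * b) : ℂ)⁻¹ *
      ((2 * π * b : ℝ) : ℂ) = 1 := by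
    have hsqrt := ofReal_sqrt_two_pi_mul_ne_zero hb
    rw [← mul_inv, inv_mul_eq_one₀ (mul_ne_zero hsqrt hsqrt)]
    exact_mod_cast Real.mul_self_sqrt (by positivity)
  have hphase := saftPhase_neg_mul_self (b := b) (a * t ^ 2 + 2 * p * t)
  rw [funext (SAFT_mul_exp_neg_eq hb.ne' f t), integral_const_mul, hinv,
    abs_of_pos (by positivity), Complex.real_smul, saftModulate]
  linear_combination (-f t) * hphase - f t * saftPhase b (-(a * t ^ 2 + 2 * p * t)) *
    saftPhase b (a * t ^ 2 + 2 * p * t) * hnormalise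

/-- SAFT inversion formula. -/
theorem saft_inversion (a b c d p q : ℝ) (hb : 0 < b) (habcd : a * d - b * c = 1)
    (f : ℝ → ℂ) (hf1 : Integrable f) (hfc : Continuous f)
    (hF1 : Integrable (SAFT a b d p q f)) :
    ∀ t : ℝ, f t =
      (Real.sqrt (2 * π * b) : ℂ)⁻¹ *
        ∫ ω : ℝ, SAFT a b d p q f ω * Complex.exp (-(Complex.I / (2 * b)) *
          ((d * ω ^ 2 + a * t ^ 2 - 2 * t * ω + 2 * (b * q - d * p) * ω + 2 * p * t : ℝ) : ℂ)) :=
  saft_inversion_general a b d p q hb f hf1 hfc hF1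
end

section
/- SAFT convolution theorem: let f, g ∈ L¹(ℝ) with SAFTs F_A and G_A, and let h = f ∗_A g. Then the SAFT H_A of h satisfies, for every ω ∈ ℝ, H_A(ω) = exp(−(Complex.I/(2b)) · (d·ω² + Ω·ω)) · F_A(ω) · G_A(ω). -/
open MeasureTheory Real

/-- The SAFT convolution `f ∗_A g`. -/
noncomputable def saftConv (a b : ℝ) (f g : ℝ → ℂ) (t : ℝ) : ℂ :=
  (Real.sqrt |b| : ℂ)⁻¹ * Complex.exp (-(Complex.I * ((a * t ^ 2 / (2 * b) : ℝ) : ℂ))) *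
    ((Real.sqrt (2 * π) : ℂ)⁻¹ *
      ∫ x : ℝ, Complex.exp (Complex.I * ((a * (t - x) ^ 2 / (2 * b) : ℝ) : ℂ)) * f (t - x) *
        (Complex.exp (Complex.I * ((a * x ^ 2 / (2 * b) : ℝ) : ℂ)) * g x))

/-!
Multiplying by the chirp `exp (i a t² / (2b))` turns the SAFT into an ordinary Fourier transform
of the chirped function, evaluated at `(ω - p) / (2πb)` and multiplied by the phase
`exp (i (d ω² + Ω ω) / (2b))`; it turns the SAFT convolution into `(2πb)^(-1/2)` times the ordinary
convolution of the chirped functions. The classical convolution theorem then yields the product,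
and the factor `exp (-i (d ω² + Ω ω) / (2b))` cancels the surplus phase.
-/

open FourierTransform Convolution

theorem MeasureTheory.Integrable.exp_I_mul_mul {α : Type*} [MeasurableSpace α] {μ : Measure α}
    {f : α → ℂ} {φ : α → ℝ} (hf : Integrable f μ) (hφ : Measurable φ) :
    Integrable (fun x => Complex.exp (Complex.I * φ x) * f x) μ :=
  hf.bdd_mul (by fun_prop) (.of_forall fun x => (Complex.norm_exp_I_mul_ofReal (φ x)).le)

theorem Real.fourier_const_mul (c : ℂ) (f : ℝ → ℂ) (w : ℝ) :
    𝓕 (fun v => c * f v) w = c * 𝓕 f w := by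
  simp only [fourier_real_eq, Circle.smul_def, smul_eq_mul, mul_left_comm _ c, integral_const_mul]

noncomputable def chirpMul (a b : ℝ) (f : ℝ → ℂ) (t : ℝ) : ℂ :=
  Complex.exp (Complex.I * ((a * t ^ 2 / (2 * b) : ℝ) : ℂ)) * f t

theorem MeasureTheory.Integrable.chirpMul {f : ℝ → ℂ} (hf : Integrable f) (a b : ℝ) :
    Integrable (chirpMul a b f) :=
  hf.exp_I_mul_mul (by fun_prop)

theorem SAFT_eq_fourier_chirpMul (a b d p q : ℝ) (f : ℝ → ℂ) (ω : ℝ) :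
    SAFT a b d p q f ω = (Real.sqrt (2 * π * b) : ℂ)⁻¹ *
      Complex.exp (Complex.I / (2 * b) * ((d * ω ^ 2 + 2 * (b * q - d * p) * ω : ℝ) : ℂ)) *
      𝓕 (chirpMul a b f) ((ω - p) / (2 * π * b)) := by
  rw [SAFT, fourier_real_eq_integral_exp_smul, mul_assoc _ (Complex.exp _),
    ← integral_const_mul (Complex.exp _)]
  congr 1
  refine integral_congr_ae (.of_forall fun t => ?_)
  simp only [chirpMul, smul_eq_mul]
  rw [← mul_assoc, ← mul_assoc, ← Complex.exp_add, ← Complex.exp_add, mul_comm]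
  congr 2
  push_cast
  field_simp
  ring

theorem chirpMul_saftConv {b : ℝ} (hb : 0 < b) (a : ℝ) (f g : ℝ → ℂ) :
    chirpMul a b (saftConv a b f g) = fun t => (Real.sqrt (2 * π * b) : ℂ)⁻¹ *
      (chirpMul a b f ⋆[ContinuousLinearMap.mul ℂ ℂ] chirpMul a b g) t := by
  have hsqrt : (Real.sqrt (2 * π * b) : ℂ) = Real.sqrt |b| * Real.sqrt (2 * π) := by
    rw [abs_of_pos hb, ← Complex.ofReal_mul, ← Real.sqrt_mul hb.le, mul_comm]
  ext t
  simp only [chirpMul, saftConv, convolution_mul_swap, hsqrt, Complex.exp_neg]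
  field_simp

theorem saft_convolution_general (a b d p q : ℝ) (hb : 0 < b)
    (f g : ℝ → ℂ) (hf : Integrable f) (hg : Integrable g) :
    ∀ ω : ℝ, SAFT a b d p q (saftConv a b f g) ω =
      Complex.exp (-(Complex.I / (2 * b)) *
          ((d * ω ^ 2 + 2 * (b * q - d * p) * ω : ℝ) : ℂ)) *
        SAFT a b d p q f ω * SAFT a b d p q g ω := by
  intro ω
  simp only [SAFT_eq_fourier_chirpMul, chirpMul_saftConv hb, Real.fourier_const_mul,
    Real.fourier_mul_convolution_eq (hf.chirpMul a b) (hg.chirpMul a b)]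
  rw [neg_mul, Complex.exp_neg]
  field_simp

/-- SAFT convolution theorem. -/
theorem saft_convolution (a b c d p q : ℝ) (hb : 0 < b) (habcd : a * d - b * c = 1)
    (f g : ℝ → ℂ) (hf : Integrable f) (hg : Integrable g) :
    ∀ ω : ℝ, SAFT a b d p q (saftConv a b f g) ω =
      Complex.exp (-(Complex.I / (2 * b)) *
          ((d * ω ^ 2 + 2 * (b * q - d * p) * ω : ℝ) : ℂ)) *
        SAFT a b d p q f ω * SAFT a b d p q g ω :=
  saft_convolution_general a b d p q hb f g hf hg
end

section
/- Semi-discrete SAFT convolution theorem: let c : ℤ → ℂ be absolutely summable and φ ∈ L¹(ℝ) with SAFT Φ_A, and let h be the semi-discrete SAFT convolution of c with φ. Then the SAFT H_A of h satisfies, for every ω ∈ ℝ, H_A(ω) = exp(−(Complex.I/(2b)) · (d·ω² + Ω·ω)) · Ĉ_A(ω) · Φ_A(ω), where Ĉ_A is the discrete-time SAFT of c. -/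
/-!
Multiplying the semi-discrete convolution `h` by the SAFT kernel `K(t) = K_ω(t)`, the chirps
`exp(± i a t² / 2b)` cancel and the remaining phase splits as
`K(k) · K(t - k) · exp(-i (d ω² + Ω ω) / 2b)`. Hence `h · K` is a sum of integer translates of
`φ · K` with weights of modulus `|c k|`; as `c ∈ ℓ¹` and `φ ∈ L¹` it may be integrated term by term,
and translation invariance of Lebesgue measure factors the result into the two transforms.
-/

open MeasureTheory Real

/-- The discrete-time SAFT of a sequence `c : ℤ → ℂ`. -/
noncomputable def dtSAFT (a b d p q : ℝ) (c : ℤ → ℂ) (ω : ℝ) : ℂ :=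
  (Real.sqrt (2 * π * b) : ℂ)⁻¹ *
    ∑' k : ℤ, c k * Complex.exp (Complex.I / (2 * b) *
      ((a * (k : ℝ) ^ 2 + d * ω ^ 2 - 2 * (k : ℝ) * ω + 2 * (b * q - d * p) * ω
        + 2 * p * (k : ℝ) : ℝ) : ℂ))

/-- The semi-discrete SAFT convolution of a sequence `c : ℤ → ℂ` with `φ : ℝ → ℂ`. -/
noncomputable def semiDiscreteSaftConv (a b : ℝ) (c : ℤ → ℂ) (φ : ℝ → ℂ) (t : ℝ) : ℂ :=
  (Real.sqrt (2 * π * b) : ℂ)⁻¹ * Complex.exp (-(Complex.I * ((a * t ^ 2 / (2 * b) : ℝ) : ℂ))) *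
    ∑' k : ℤ, c k * Complex.exp (Complex.I * ((a * (k : ℝ) ^ 2 / (2 * b) : ℝ) : ℂ)) *
      Complex.exp (Complex.I * ((a * (t - (k : ℝ)) ^ 2 / (2 * b) : ℝ) : ℂ)) * φ (t - (k : ℝ))

section TranslateSum

variable {G 𝕜 ι : Type*} [MeasurableSpace G] [AddGroup G] [MeasurableAdd G] {μ : Measure G}
  [μ.IsAddRightInvariant] [RCLike 𝕜] [Countable ι]

theorem integral_tsum_mul_comp_sub {w : ι → 𝕜} (hw : Summable fun k => ‖w k‖) {F : G → 𝕜}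
    (hF : Integrable F μ) (τ : ι → G) :
    ∫ t, ∑' k, w k * F (t - τ k) ∂μ = (∑' k, w k) * ∫ t, F t ∂μ := by
  have hint : ∀ k, Integrable (fun t => w k * F (t - τ k)) μ :=
    fun k => (hF.comp_sub_right (τ k)).const_mul (w k)
  have hnorm : ∀ k, ∫ t, ‖w k * F (t - τ k)‖ ∂μ = ‖w k‖ * ∫ t, ‖F t‖ ∂μ := fun k => by
    simp only [norm_mul, integral_const_mul, integral_sub_right_eq_self (‖F ·‖) (τ k)]
  rw [← integral_tsum_of_summable_integral_norm hint (by simpa only [hnorm] using hw.mul_right _),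
    ← tsum_mul_right]
  simp only [integral_const_mul, integral_sub_right_eq_self F]

end TranslateSum

noncomputable def saftKernel (a b d p q ω t : ℝ) : ℂ :=
  Complex.exp (Complex.I / (2 * b) *
    ((a * t ^ 2 + d * ω ^ 2 - 2 * t * ω + 2 * p * t + 2 * (b * q - d * p) * ω : ℝ) : ℂ))

section SaftKernel

variable (a b d p q ω : ℝ)

theorem norm_saftKernel (t : ℝ) : ‖saftKernel a b d p q ω t‖ = 1 := by
  rw [saftKernel, Complex.norm_exp]
  simp [Complex.div_re, -Complex.ofReal_pow]

theorem continuous_saftKernel : Continuous (saftKernel a b d p q ω) := by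
  unfold saftKernel
  fun_prop

theorem SAFT_eq_integral_saftKernel (f : ℝ → ℂ) :
    SAFT a b d p q f ω =
      (Real.sqrt (2 * π * b) : ℂ)⁻¹ * ∫ t, f t * saftKernel a b d p q ω t :=
  rfl

theorem dtSAFT_eq_tsum_saftKernel (c : ℤ → ℂ) :
    dtSAFT a b d p q c ω =
      (Real.sqrt (2 * π * b) : ℂ)⁻¹ * ∑' k : ℤ, c k * saftKernel a b d p q ω k := by
  unfold dtSAFT saftKernel
  congr 3 with k
  ring_nf

theorem semiDiscreteSaftConv_mul_saftKernel (c : ℤ → ℂ) (φ : ℝ → ℂ) (t : ℝ) :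
    semiDiscreteSaftConv a b c φ t * saftKernel a b d p q ω t =
      (Real.sqrt (2 * π * b) : ℂ)⁻¹ * ∑' k : ℤ,
        Complex.exp (-(Complex.I / (2 * b)) * ((d * ω ^ 2 + 2 * (b * q - d * p) * ω : ℝ) : ℂ)) *
          (c k * saftKernel a b d p q ω k) * (φ (t - k) * saftKernel a b d p q ω (t - k)) := by
  rw [semiDiscreteSaftConv, mul_assoc, mul_assoc, ← tsum_mul_right, ← tsum_mul_left]
  congr 1
  refine tsum_congr fun k => ?_
  calc _ = c k * φ (t - k) * (Complex.exp (-(Complex.I * ((a * t ^ 2 / (2 * b) : ℝ) : ℂ))) *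
        Complex.exp (Complex.I * ((a * (k : ℝ) ^ 2 / (2 * b) : ℝ) : ℂ)) *
        Complex.exp (Complex.I * ((a * (t - (k : ℝ)) ^ 2 / (2 * b) : ℝ) : ℂ)) *
        saftKernel a b d p q ω t) := by ring
    _ = c k * φ (t - k) *
        (Complex.exp (-(Complex.I / (2 * b)) * ((d * ω ^ 2 + 2 * (b * q - d * p) * ω : ℝ) : ℂ)) *
          saftKernel a b d p q ω k * saftKernel a b d p q ω (t - k)) := by
      simp only [saftKernel, ← Complex.exp_add]
      congr 2
      push_cast
      ring
    _ = _ := by ring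

end SaftKernel

theorem semi_discrete_saft_convolution_general (a b d p q : ℝ)
    (cseq : ℤ → ℂ) (hc : Summable fun k : ℤ => ‖cseq k‖)
    (φ : ℝ → ℂ) (hφ : Integrable φ) :
    ∀ ω : ℝ, SAFT a b d p q (semiDiscreteSaftConv a b cseq φ) ω =
      Complex.exp (-(Complex.I / (2 * b)) * ((d * ω ^ 2 + 2 * (b * q - d * p) * ω : ℝ) : ℂ)) *
        dtSAFT a b d p q cseq ω * SAFT a b d p q φ ω := by
  intro ω
  set S : ℂ := (Real.sqrt (2 * π * b) : ℂ)⁻¹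
  set E := Complex.exp (-(Complex.I / (2 * b)) * ((d * ω ^ 2 + 2 * (b * q - d * p) * ω : ℝ) : ℂ))
  set K := saftKernel a b d p q ω
  have hE : ‖E‖ = 1 := by simp [E, Complex.norm_exp, Complex.div_re, -Complex.ofReal_pow]
  have hw : Summable fun k : ℤ => ‖E * (cseq k * K k)‖ := by
    simpa only [norm_mul, hE, K, norm_saftKernel, one_mul, mul_one] using hc
  have hφK : Integrable fun t => φ t * K t :=
    hφ.mul_bdd (continuous_saftKernel a b d p q ω).aestronglyMeasurable
      (.of_forall fun t => (norm_saftKernel a b d p q ω t).le)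
  calc SAFT a b d p q (semiDiscreteSaftConv a b cseq φ) ω
      = S * (S * ∫ t, ∑' k : ℤ, E * (cseq k * K k) * (φ (t - k) * K (t - k))) := by
        simp only [SAFT_eq_integral_saftKernel, semiDiscreteSaftConv_mul_saftKernel,
          integral_const_mul]
        rfl
    _ = S * (S * ((∑' k : ℤ, E * (cseq k * K k)) * ∫ t, φ t * K t)) := by
        rw [integral_tsum_mul_comp_sub hw hφK (fun k : ℤ => (k : ℝ))]
    _ = E * dtSAFT a b d p q cseq ω * SAFT a b d p q φ ω := by
        rw [tsum_mul_left, dtSAFT_eq_tsum_saftKernel, SAFT_eq_integral_saftKernel]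
        ring

/-- Semi-discrete SAFT convolution theorem. -/
theorem semi_discrete_saft_convolution (a b c d p q : ℝ) (hb : 0 < b)
    (habcd : a * d - b * c = 1) (cseq : ℤ → ℂ) (hc : Summable fun k : ℤ => ‖cseq k‖)
    (φ : ℝ → ℂ) (hφ : Integrable φ) :
    ∀ ω : ℝ, SAFT a b d p q (semiDiscreteSaftConv a b cseq φ) ω =
      Complex.exp (-(Complex.I / (2 * b)) * ((d * ω ^ 2 + 2 * (b * q - d * p) * ω : ℝ) : ℂ)) *
        dtSAFT a b d p q cseq ω * SAFT a b d p q φ ω :=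
  semi_discrete_saft_convolution_general a b d p q cseq hc φ hφ
end

section
/- Periodization identity for SAFT shift-invariant spaces: let c : ℤ → ℂ be absolutely summable and φ ∈ L¹(ℝ) with SAFT Φ_A. Then, as an identity in [0, ∞], ∫_ℝ |Ĉ_A(ω)|² · |Φ_A(ω)|² dω = ∫_0^Δ |Ĉ_A(ω)|² · (Σ_{k∈ℤ} |Φ_A(ω + k·Δ)|²) dω, where Ĉ_A is the discrete-time SAFT of c. -/
open MeasureTheory Real
open scoped ENNReal NNReal

/-!
Tiling `ℝ` by the translates of `[0, Δ]` rewrites the left side as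
`∫_0^Δ Σ_k |Ĉ_A(ω + kΔ)|² |Φ_A(ω + kΔ)|² dω`. Shifting `ω` by `Δ = 2πb` changes
the phase of the `k`-th term of `Ĉ_A` by `-2πk` plus an amount independent of `k`, so
`|Ĉ_A|` is `Δ`-periodic and factors out of the sum.
-/

section Periodization

variable {T : ℝ} {f g h : ℝ → ℝ≥0∞}

theorem lintegral_eq_setLIntegral_Icc_tsum_add_int_mul (hT : 0 < T) (hf : Measurable f) :
    ∫⁻ x, f x = ∫⁻ x in Set.Icc 0 T, ∑' k : ℤ, f (x + k * T) := by
  have hmul : Function.Bijective (fun k : ℤ =>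
      (⟨k • T, AddSubgroup.zsmul_mem_zmultiples T k⟩ : AddSubgroup.zmultiples T)) := by
    refine ⟨fun m n hmn => (zsmul_left_strictMono hT).injective (congrArg Subtype.val hmn), ?_⟩
    rintro ⟨x, hx⟩
    obtain ⟨k, rfl⟩ := AddSubgroup.mem_zmultiples_iff.1 hx
    exact ⟨k, rfl⟩
  have htranslate (x : ℝ) :
      ∑' g : AddSubgroup.zmultiples T, f (g +ᵥ x) = ∑' k : ℤ, f (x + k * T) := by
    rw [← (Equiv.ofBijective _ hmul).tsum_eq]
    refine tsum_congr fun k => congrArg f ?_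
    simp only [Equiv.ofBijective_apply, AddSubgroup.vadd_def, vadd_eq_add, zsmul_eq_mul]
    ring
  calc ∫⁻ x, f x
      = ∑' g : AddSubgroup.zmultiples T, ∫⁻ x in Set.Ioc 0 (0 + T), f (g +ᵥ x) :=
        (isAddFundamentalDomain_Ioc hT 0).lintegral_eq_tsum'' f
    _ = ∫⁻ x in Set.Ioc 0 (0 + T), ∑' g : AddSubgroup.zmultiples T, f (g +ᵥ x) :=
        (lintegral_tsum fun g => (hf.comp (measurable_const_add _)).aemeasurable).symm
    _ = ∫⁻ x in Set.Icc 0 T, ∑' k : ℤ, f (x + k * T) := by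
        simp only [zero_add, htranslate, Measure.restrict_congr_set Ioc_ae_eq_Icc]

theorem lintegral_mul_eq_setLIntegral_Icc_mul_tsum (hT : 0 < T) (hg : Measurable g)
    (hh : Measurable h) (hper : Function.Periodic g T) :
    ∫⁻ x, g x * h x = ∫⁻ x in Set.Icc 0 T, g x * ∑' k : ℤ, h (x + k * T) := by
  rw [lintegral_eq_setLIntegral_Icc_tsum_add_int_mul hT (hg.fun_mul hh)]
  refine setLIntegral_congr_fun measurableSet_Icc fun x _ => ?_
  simp only [(hper.int_mul _) x, ENNReal.tsum_mul_left]

end Periodization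

section SAFT

variable (a b d p q : ℝ)

theorem norm_exp_I_div_mul_ofReal (x : ℝ) :
    ‖Complex.exp (Complex.I / (2 * b) * (x : ℂ))‖ = 1 := by
  rw [show Complex.I / (2 * (b : ℝ)) * (x : ℂ) = ((x / (2 * b) : ℝ) : ℂ) * Complex.I by
    push_cast; ring, Complex.norm_exp_ofReal_mul_I]

theorem continuous_SAFT {φ : ℝ → ℂ} (hφ : Integrable φ) : Continuous (SAFT a b d p q φ) := by
  refine continuous_const.mul (continuous_of_dominated (fun ω => ?_) (fun ω => ?_) hφ.norm ?_)
  · exact hφ.aestronglyMeasurable.mul (Continuous.aestronglyMeasurable (by fun_prop))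
  · filter_upwards with t
    rw [norm_mul, norm_exp_I_div_mul_ofReal, mul_one]
  · filter_upwards with t
    fun_prop

theorem continuous_dtSAFT {c : ℤ → ℂ} (hc : Summable fun k => ‖c k‖) :
    Continuous (dtSAFT a b d p q c) := by
  refine continuous_const.mul (continuous_tsum (fun k => by fun_prop) hc fun k ω => ?_)
  rw [norm_mul, norm_exp_I_div_mul_ofReal, mul_one]

def dtSAFTPhase (k : ℤ) (ω : ℝ) : ℝ :=
  a * (k : ℝ) ^ 2 + d * ω ^ 2 - 2 * (k : ℝ) * ω + 2 * (b * q - d * p) * ω + 2 * p * (k : ℝ)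

theorem exp_dtSAFTPhase_add_period (hb : b ≠ 0) (k : ℤ) (ω : ℝ) :
    Complex.exp (Complex.I / (2 * b) * dtSAFTPhase a b d p q k (ω + 2 * π * b)) =
      Complex.exp (Complex.I / (2 * b) *
          ((d * (2 * ω * (2 * π * b) + (2 * π * b) ^ 2) + 2 * (b * q - d * p) * (2 * π * b) : ℝ)))
        * Complex.exp (Complex.I / (2 * b) * dtSAFTPhase a b d p q k ω) := by
  rw [← Complex.exp_add, ← mul_one (Complex.exp (_ + _)),
    ← Complex.exp_int_mul_two_pi_mul_I (-k), ← Complex.exp_add]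
  have hb' : (b : ℂ) ≠ 0 := by exact_mod_cast hb
  congr 1
  simp only [dtSAFTPhase]
  push_cast
  field_simp
  ring

theorem periodic_nnnorm_dtSAFT (hb : b ≠ 0) (c : ℤ → ℂ) :
    Function.Periodic (fun ω => ‖dtSAFT a b d p q c ω‖₊) (2 * π * b) := by
  intro ω
  simp only [dtSAFT, nnnorm_mul]
  congr 1
  change ‖∑' k : ℤ, c k * Complex.exp (Complex.I / (2 * b) *
      dtSAFTPhase a b d p q k (ω + 2 * π * b))‖₊ = _
  simp only [exp_dtSAFTPhase_add_period a b d p q hb, mul_left_comm (c _), tsum_mul_left]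
  rw [← NNReal.coe_inj, coe_nnnorm, coe_nnnorm, norm_mul, norm_exp_I_div_mul_ofReal, one_mul]
  rfl

end SAFT

theorem saft_periodization_general (a b d p q : ℝ) (hb : 0 < b)
    (cseq : ℤ → ℂ) (hc : Summable fun k : ℤ => ‖cseq k‖)
    (φ : ℝ → ℂ) (hφ : Integrable φ) :
    (∫⁻ ω : ℝ, (‖dtSAFT a b d p q cseq ω‖₊ : ℝ≥0∞) ^ 2 *
        (‖SAFT a b d p q φ ω‖₊ : ℝ≥0∞) ^ 2) =
      ∫⁻ ω in Set.Icc (0:ℝ) (2 * π * b), (‖dtSAFT a b d p q cseq ω‖₊ : ℝ≥0∞) ^ 2 *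
        ∑' k : ℤ, (‖SAFT a b d p q φ (ω + (k : ℝ) * (2 * π * b))‖₊ : ℝ≥0∞) ^ 2 :=
  lintegral_mul_eq_setLIntegral_Icc_mul_tsum (by positivity)
    ((continuous_dtSAFT a b d p q hc).measurable.nnnorm.coe_nnreal_ennreal.pow_const 2)
    ((continuous_SAFT a b d p q hφ).measurable.nnnorm.coe_nnreal_ennreal.pow_const 2)
    ((periodic_nnnorm_dtSAFT a b d p q hb.ne' cseq).comp fun x => (x : ℝ≥0∞) ^ 2)

/-- Periodization identity for SAFT shift-invariant spaces (an identity in `[0, ∞]`),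
with `Δ = 2πb`. -/
theorem saft_periodization (a b c d p q : ℝ) (hb : 0 < b) (habcd : a * d - b * c = 1)
    (cseq : ℤ → ℂ) (hc : Summable fun k : ℤ => ‖cseq k‖)
    (φ : ℝ → ℂ) (hφ : Integrable φ) :
    (∫⁻ ω : ℝ, (‖dtSAFT a b d p q cseq ω‖₊ : ℝ≥0∞) ^ 2 *
        (‖SAFT a b d p q φ ω‖₊ : ℝ≥0∞) ^ 2) =
      ∫⁻ ω in Set.Icc (0:ℝ) (2 * π * b), (‖dtSAFT a b d p q cseq ω‖₊ : ℝ≥0∞) ^ 2 *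
        ∑' k : ℤ, (‖SAFT a b d p q φ (ω + (k : ℝ) * (2 * π * b))‖₊ : ℝ≥0∞) ^ 2 :=
  saft_periodization_general a b d p q hb cseq hc φ hφ
end

section
/- Grammian factorization: let c : ℤ → ℂ be absolutely summable with discrete-time SAFT Ĉ_A, let φ ∈ L¹(ℝ) with SAFT Φ_A, and define F_A(ω) := exp(−(Complex.I/(2b))·(d·ω² + Ω·ω)) · Ĉ_A(ω) · Φ_A(ω). Then for every ω ∈ ℝ, Σ_{k∈ℤ} |F_A(ω + k·Δ)|² = |Ĉ_A(ω)|² · Σ_{k∈ℤ} |Φ_A(ω + k·Δ)|² (an identity in [0, ∞]). -/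
open MeasureTheory Real
open scoped ENNReal NNReal

/-!
Pulling the chirp `exp (i (d ω² + Ω ω) / 2b)` out of the discrete-time SAFT leaves the sum
`∑ c k exp (i (a k² + 2 p k - 2 k ω) / 2b)`, which is `2πb`-periodic in `ω` because each term
picks up only the factor `exp (-2πi k m)` under `ω ↦ ω + m · 2πb`. Hence `|Ĉ_A|` is
`2πb`-periodic, the chirp in `F_A` is unimodular, and `|Ĉ_A(ω)|²` factors out of the sum.
-/

open Complex

lemma nnnorm_exp_mul_ofReal {z : ℂ} (hz : z.re = 0) (r : ℝ) : ‖exp (z * r)‖₊ = 1 := by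
  simp [← NNReal.coe_eq_one, norm_exp, hz]

lemma re_I_div_two_mul_ofReal (b : ℝ) : (I / (2 * b)).re = 0 := by
  simp [div_re]

noncomputable def dechirpedDTSAFT (a b p : ℝ) (c : ℤ → ℂ) (ω : ℝ) : ℂ :=
  ∑' k : ℤ, c k * exp (I / (2 * b) * ((a * (k : ℝ) ^ 2 + 2 * p * k - 2 * k * ω : ℝ) : ℂ))

lemma dtSAFT_eq_chirp_mul_dechirpedDTSAFT (a b d p q : ℝ) (c : ℤ → ℂ) (ω : ℝ) :
    dtSAFT a b d p q c ω = (Real.sqrt (2 * π * b) : ℂ)⁻¹ *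
      (exp (I / (2 * b) * ((d * ω ^ 2 + 2 * (b * q - d * p) * ω : ℝ) : ℂ)) *
        dechirpedDTSAFT a b p c ω) := by
  rw [dtSAFT, dechirpedDTSAFT]
  congr 1
  rw [← tsum_mul_left]
  refine tsum_congr fun k => ?_
  rw [mul_left_comm, ← Complex.exp_add]
  congr 2
  push_cast
  ring

lemma dechirpedDTSAFT_periodic (a b p : ℝ) (c : ℤ → ℂ) :
    Function.Periodic (dechirpedDTSAFT a b p c) (2 * π * b) := by
  rcases eq_or_ne b 0 with rfl | hb
  · simp [Function.Periodic]
  intro ω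
  rw [dechirpedDTSAFT, dechirpedDTSAFT]
  refine tsum_congr fun k => ?_
  have hb' : (b : ℂ) ≠ 0 := ofReal_ne_zero.mpr hb
  have harg : I / (2 * b) * ((a * (k : ℝ) ^ 2 + 2 * p * k - 2 * k * (ω + 2 * π * b) : ℝ) : ℂ) =
      I / (2 * b) * ((a * (k : ℝ) ^ 2 + 2 * p * k - 2 * k * ω : ℝ) : ℂ) +
        ((-k : ℤ) : ℂ) * (2 * π * I) := by
    push_cast
    field_simp
    ring
  rw [harg, Complex.exp_add, exp_int_mul_two_pi_mul_I, mul_one]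

lemma nnnorm_dtSAFT_add_int_mul (a b d p q : ℝ) (c : ℤ → ℂ) (ω : ℝ) (m : ℤ) :
    ‖dtSAFT a b d p q c (ω + m * (2 * π * b))‖₊ = ‖dtSAFT a b d p q c ω‖₊ := by
  simp only [dtSAFT_eq_chirp_mul_dechirpedDTSAFT, nnnorm_mul,
    nnnorm_exp_mul_ofReal (re_I_div_two_mul_ofReal b),
    ((dechirpedDTSAFT_periodic a b p c).int_mul m) ω]

theorem saft_grammian_factorization_general (a b d p q : ℝ) (cseq : ℤ → ℂ)
    (φ : ℝ → ℂ)
    (F : ℝ → ℂ)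
    (hF : ∀ ω : ℝ, F ω =
      Complex.exp (-(Complex.I / (2 * b)) * ((d * ω ^ 2 + 2 * (b * q - d * p) * ω : ℝ) : ℂ)) *
        dtSAFT a b d p q cseq ω * SAFT a b d p q φ ω) :
    ∀ ω : ℝ,
      (∑' k : ℤ, (‖F (ω + (k : ℝ) * (2 * π * b))‖₊ : ℝ≥0∞) ^ 2) =
        (‖dtSAFT a b d p q cseq ω‖₊ : ℝ≥0∞) ^ 2 *
          ∑' k : ℤ, (‖SAFT a b d p q φ (ω + (k : ℝ) * (2 * π * b))‖₊ : ℝ≥0∞) ^ 2 := by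
  intro ω
  have hchirp : (-(I / (2 * b))).re = 0 := by rw [neg_re, re_I_div_two_mul_ofReal, neg_zero]
  have hterm : ∀ k : ℤ, ‖F (ω + k * (2 * π * b))‖₊ =
      ‖dtSAFT a b d p q cseq ω‖₊ * ‖SAFT a b d p q φ (ω + k * (2 * π * b))‖₊ := by
    intro k
    rw [hF, nnnorm_mul, nnnorm_mul, nnnorm_exp_mul_ofReal hchirp, one_mul,
      nnnorm_dtSAFT_add_int_mul]
  simp only [hterm, ENNReal.coe_mul, mul_pow]
  exact ENNReal.tsum_mul_left

/-- Grammian factorization for SAFT shift-invariant spaces (an identity in `[0, ∞]`),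
with `Δ = 2πb`. -/
theorem saft_grammian_factorization (a b c d p q : ℝ) (hb : 0 < b)
    (habcd : a * d - b * c = 1) (cseq : ℤ → ℂ) (hc : Summable fun k : ℤ => ‖cseq k‖)
    (φ : ℝ → ℂ) (hφ : Integrable φ)
    (F : ℝ → ℂ)
    (hF : ∀ ω : ℝ, F ω =
      Complex.exp (-(Complex.I / (2 * b)) * ((d * ω ^ 2 + 2 * (b * q - d * p) * ω : ℝ) : ℂ)) *
        dtSAFT a b d p q cseq ω * SAFT a b d p q φ ω) :
    ∀ ω : ℝ,
      (∑' k : ℤ, (‖F (ω + (k : ℝ) * (2 * π * b))‖₊ : ℝ≥0∞) ^ 2) =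
        (‖dtSAFT a b d p q cseq ω‖₊ : ℝ≥0∞) ^ 2 *
          ∑' k : ℤ, (‖SAFT a b d p q φ (ω + (k : ℝ) * (2 * π * b))‖₊ : ℝ≥0∞) ^ 2 :=
  saft_grammian_factorization_general a b d p q cseq φ F hF
end

section
/- Poisson summation formula for the SAFT: let f : ℝ → ℂ be a Schwartz function with SAFT F_A. Then for every t ∈ ℝ, sqrt(2πb) · Σ_{k∈ℤ} f(t + k·Δ) · exp((Complex.I/(2b)) · (a·(t + k·Δ)² + 2·p·(t + k·Δ))) = Σ_{n∈ℤ} exp(−(Complex.I/(2b)) · (d·n² + Ω·n − 2·n·t)) · F_A(n). -/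
/-!
Multiplying `f` by the chirp `exp (i (a x² + 2 p x) / (2b))` turns the SAFT into an ordinary
Fourier transform: up to the factor `(2πb)^(-1/2) exp (i (d ω² + Ω ω) / (2b))`, `F_A(ω)` is the
Fourier transform of the chirped function `g` at `ω / Δ`. The chirped function is again Schwartz,
since the chirp has temperate growth, so Poisson summation for `g` with period `Δ`,
`∑ₖ g (t + kΔ) = Δ⁻¹ ∑ₙ ĝ (n / Δ) e^{2πint/Δ}`, is the claimed identity once the quadratic
phases in `n` cancel.
-/

open MeasureTheory Real

open Complex FourierTransform SchwartzMap

theorem iteratedDeriv_cexp_ofReal_mul_I (n : ℕ) :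
    iteratedDeriv n (fun r : ℝ => cexp ((r : ℂ) * I)) =
      fun r : ℝ => I ^ n * cexp ((r : ℂ) * I) := by
  induction n with
  | zero => simp
  | succ n ih =>
    funext r
    rw [iteratedDeriv_succ, ih]
    have := (((hasDerivAt_id r).ofReal_comp.mul_const I).cexp).const_mul (I ^ n)
    simp only [id, ofReal_one, one_mul] at this
    rw [this.deriv]
    ring

theorem hasTemperateGrowth_cexp_ofReal_mul_I :
    (fun r : ℝ => cexp ((r : ℂ) * I)).HasTemperateGrowth := by
  refine ⟨(ofRealCLM.contDiff.mul contDiff_const).cexp, fun n => ⟨0, 1, fun r => ?_⟩⟩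
  rw [norm_iteratedFDeriv_eq_norm_iteratedDeriv, iteratedDeriv_cexp_ofReal_mul_I]
  simp [norm_exp_ofReal_mul_I]

theorem Function.HasTemperateGrowth.cexp_ofReal_mul_I {E : Type*} [NormedAddCommGroup E]
    [NormedSpace ℝ E] {φ : E → ℝ} (hφ : φ.HasTemperateGrowth) :
    (fun x => cexp ((φ x : ℂ) * I)).HasTemperateGrowth :=
  hasTemperateGrowth_cexp_ofReal_mul_I.comp hφ

theorem Real.fourier_comp_mul_left {E : Type*} [NormedAddCommGroup E] [NormedSpace ℂ E]
    (f : ℝ → E) {c : ℝ} (hc : c ≠ 0) (ξ : ℝ) :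
    𝓕 (fun x => f (c * x)) ξ = |c|⁻¹ • 𝓕 f (ξ / c) := by
  simp only [fourier_real_eq_integral_exp_smul]
  have hphase (x : ℝ) : -2 * π * x * ξ = -2 * π * (c * x) * (ξ / c) := by field_simp
  simp_rw [hphase]
  rw [Measure.integral_comp_mul_left
    (fun y : ℝ => cexp (((-2 * π * y * (ξ / c) : ℝ) : ℂ) * I) • f y) c, abs_inv]

noncomputable def saftChirp (a b p : ℝ) (x : ℝ) : ℂ :=
  cexp (I / (2 * b) * ((a * x ^ 2 + 2 * p * x : ℝ) : ℂ))

theorem hasTemperateGrowth_saftChirp (a b p : ℝ) : (saftChirp a b p).HasTemperateGrowth := by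
  have hphase : (fun x : ℝ => (2 * b)⁻¹ * (a * x ^ 2 + 2 * p * x)).HasTemperateGrowth := by
    fun_prop
  convert hphase.cexp_ofReal_mul_I using 2 with x
  unfold saftChirp
  push_cast
  ring_nf

theorem SchwartzMap.tsum_comp_add_mul_int (g : 𝓢(ℝ, ℂ)) {Δ : ℝ} (hΔ : Δ ≠ 0) (x : ℝ) :
    ∑' k : ℤ, g (x + k * Δ) =
      |Δ|⁻¹ * ∑' n : ℤ, 𝓕 (g : ℝ → ℂ) (n / Δ) * cexp (2 * π * I * n * x / Δ) := by
  let h : 𝓢(ℝ, ℂ) := compCLMOfContinuousLinearEquiv ℝ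
    (LinearEquiv.smulOfNeZero ℝ ℝ Δ hΔ).toContinuousLinearEquiv g
  have hh : ⇑h = fun y => g (Δ * y) := rfl
  calc ∑' k : ℤ, g (x + k * Δ) = ∑' k : ℤ, h (x / Δ + k) := by
        refine tsum_congr fun k => ?_
        rw [hh]
        field_simp
    _ = ∑' n : ℤ, 𝓕 h n * fourier n (x / Δ : UnitAddCircle) := h.tsum_eq_tsum_fourier _
    _ = _ := by
        rw [← tsum_mul_left]
        refine tsum_congr fun n => ?_
        rw [fourier_coe, hh, Real.fourier_comp_mul_left _ hΔ, fourier_coe_apply,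
          Complex.real_smul, Complex.ofReal_inv]
        push_cast
        ring_nf

theorem SAFT_eq_fourier_saftChirp_mul (a b d p q : ℝ) (hb : b ≠ 0) (f : ℝ → ℂ) (ω : ℝ) :
    SAFT a b d p q f ω = (√(2 * π * b) : ℂ)⁻¹ *
      cexp (I / (2 * b) * ((d * ω ^ 2 + 2 * (b * q - d * p) * ω : ℝ) : ℂ)) *
      𝓕 (fun x => saftChirp a b p x * f x) (ω / (2 * π * b)) := by
  have hbC : (b : ℂ) ≠ 0 := by exact_mod_cast hb
  rw [SAFT, fourier_real_eq_integral_exp_smul, mul_assoc _ (cexp _),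
    ← integral_const_mul (cexp _)]
  congr 2
  funext x
  have hphase : I / (2 * b) *
      ((a * x ^ 2 + d * ω ^ 2 - 2 * x * ω + 2 * p * x + 2 * (b * q - d * p) * ω : ℝ) : ℂ) =
      I / (2 * b) * ((d * ω ^ 2 + 2 * (b * q - d * p) * ω : ℝ) : ℂ) +
        ((-2 * π * x * (ω / (2 * π * b)) : ℝ) : ℂ) * I +
        I / (2 * b) * ((a * x ^ 2 + 2 * p * x : ℝ) : ℂ) := by
    push_cast
    field_simp
    ring
  rw [smul_eq_mul, saftChirp, hphase, Complex.exp_add, Complex.exp_add]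
  ring

theorem saft_poisson_summation_general (a b d p q : ℝ) (hb : 0 < b)
    (f : SchwartzMap ℝ ℂ) :
    ∀ t : ℝ,
      (Real.sqrt (2 * π * b) : ℂ) *
        ∑' k : ℤ, f (t + (k : ℝ) * (2 * π * b)) *
          Complex.exp (Complex.I / (2 * b) *
            ((a * (t + (k : ℝ) * (2 * π * b)) ^ 2 + 2 * p * (t + (k : ℝ) * (2 * π * b)) : ℝ) : ℂ)) =
      ∑' n : ℤ, Complex.exp (-(Complex.I / (2 * b)) *
          ((d * (n : ℝ) ^ 2 + 2 * (b * q - d * p) * (n : ℝ) - 2 * (n : ℝ) * t : ℝ) : ℂ)) *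
        SAFT a b d p q (fun x => f x) (n : ℝ) := by
  intro t
  set Δ := 2 * π * b with hΔ
  have hΔpos : 0 < Δ := by positivity
  let g : 𝓢(ℝ, ℂ) := smulLeftCLM ℂ (saftChirp a b p) f
  have hg : ⇑g = fun x => saftChirp a b p x * f x :=
    funext (smulLeftCLM_apply_apply (hasTemperateGrowth_saftChirp a b p) f)
  have hsqrt : (√Δ : ℂ) * ((|Δ|⁻¹ : ℝ) : ℂ) = (√Δ : ℂ)⁻¹ := by
    rw [abs_of_pos hΔpos, ← ofReal_mul, ← div_eq_mul_inv, Real.sqrt_div_self', one_div,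
      ofReal_inv]
  have hchirp (n : ℤ) : cexp (-(I / (2 * b)) *
      ((d * (n : ℝ) ^ 2 + 2 * (b * q - d * p) * (n : ℝ) - 2 * (n : ℝ) * t : ℝ) : ℂ)) *
      cexp (I / (2 * b) * ((d * (n : ℝ) ^ 2 + 2 * (b * q - d * p) * (n : ℝ) : ℝ) : ℂ)) =
      cexp (2 * π * I * n * t / Δ) := by
    rw [← Complex.exp_add, hΔ]
    congr 1
    push_cast
    field_simp
    ring
  calc _ = (√Δ : ℂ) * ∑' k : ℤ, g (t + k * Δ) := by
        simp_rw [hg, mul_comm (saftChirp a b p _), saftChirp]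
    _ = _ := by
        rw [g.tsum_comp_add_mul_int hΔpos.ne', ← mul_assoc, hsqrt, ← tsum_mul_left]
        refine tsum_congr fun n => ?_
        rw [SAFT_eq_fourier_saftChirp_mul a b d p q hb.ne', ← hg, ← hchirp n]
        ring

/-- Poisson summation formula for the SAFT, with `Δ = 2πb` and `Ω = 2*(b*q - d*p)`. -/
theorem saft_poisson_summation (a b c d p q : ℝ) (hb : 0 < b) (habcd : a * d - b * c = 1)
    (f : SchwartzMap ℝ ℂ) :
    ∀ t : ℝ,
      (Real.sqrt (2 * π * b) : ℂ) *
        ∑' k : ℤ, f (t + (k : ℝ) * (2 * π * b)) *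
          Complex.exp (Complex.I / (2 * b) *
            ((a * (t + (k : ℝ) * (2 * π * b)) ^ 2 + 2 * p * (t + (k : ℝ) * (2 * π * b)) : ℝ) : ℂ)) =
      ∑' n : ℤ, Complex.exp (-(Complex.I / (2 * b)) *
          ((d * (n : ℝ) ^ 2 + 2 * (b * q - d * p) * (n : ℝ) - 2 * (n : ℝ) * t : ℝ) : ℂ)) *
        SAFT a b d p q (fun x => f x) (n : ℝ) :=
  saft_poisson_summation_general a b d p q hb f
end
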